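/- For N = qM (q ≥ 3), the Ramanujan subspace S_q ⊆ ℂ^N is the orthogonal direct sum of its φ(q)/2 conjugate subspaces G_{q,i} = span{g(ω_{q,i}), conj(g(ω_{q,i}))}, i = 1,…,φ(q)/2: the G_{q,i} are pairwise orthogonal and their sum is S_q. -/

import Mathlib

/-!
The conjugate of `g(2πk/q)` is `g(2π(q-k)/q)`, and `k ↦ q - k` is a fixed-point-free involution
of the residues in `[1, q)` coprime to `q` (a fixed point would be `k = q/2`, coprime to `q` only
if `q = 2`), exchanging those below `q/2` with those above. This gives both the count `φ(q)/2`
and the equality of spans. For orthogonality, `⟨g(2πa/q), g(2πb/q)⟩` is `1/N` times a geometric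
sum of the `q`-th root of unity `exp(2πi(b-a)/q)` over `N = qM` consecutive powers, so it vanishes
unless `q ∣ b - a`; for distinct `k₁, k₂ ∈ [1, q/2)` none of `±k₂ ∓ k₁` is divisible by `q`.
-/

open Finset Complex Real

noncomputable def hinner {N : ℕ} (u v : Fin N → ℂ) : ℂ :=
  ∑ n, (starRingEnd ℂ) (u n) * v n

section HalfCoprimes

def halfCoprimes (q : ℕ) : Finset ℕ := {k ∈ range q | 1 ≤ k ∧ 2 * k < q ∧ k.gcd q = 1}

variable {q k : ℕ}

theorem mem_halfCoprimes : k ∈ halfCoprimes q ↔ 1 ≤ k ∧ 2 * k < q ∧ k.gcd q = 1 := by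
  simp only [halfCoprimes, mem_filter, mem_range, and_iff_right_iff_imp]
  omega

theorem gcd_sub_eq_one_of_mem_halfCoprimes (hk : k ∈ halfCoprimes q) : (q - k).gcd q = 1 := by
  have := mem_halfCoprimes.1 hk
  rw [Nat.gcd_self_sub_left (by omega), this.2.2]

theorem mem_halfCoprimes_or_sub_mem (hq : 2 < q) (hkq : k < q) (hk : k.gcd q = 1) :
    k ∈ halfCoprimes q ∨ q - k ∈ halfCoprimes q := by
  have hk0 : k ≠ 0 := by
    rintro rfl
    simp_all
  have hk2 : 2 * k ≠ q := by
    rintro rfl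
    rw [Nat.gcd_mul_left_right] at hk
    omega
  simp only [mem_halfCoprimes, Nat.gcd_self_sub_left hkq.le, hk, and_true]
  omega

theorem filter_coprime_range_eq_union (hq : 2 < q) :
    {k ∈ range q | q.Coprime k} = halfCoprimes q ∪ (halfCoprimes q).image (q - ·) := by
  ext k
  simp only [mem_filter, mem_range, mem_union, mem_image, Nat.coprime_comm (n := q), Nat.Coprime]
  constructor
  · rintro ⟨hkq, hk⟩
    exact (mem_halfCoprimes_or_sub_mem hq hkq hk).imp_right fun h => ⟨q - k, h, by omega⟩
  · rintro (hk | ⟨j, hj, rfl⟩)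
    · have := mem_halfCoprimes.1 hk
      exact ⟨by omega, this.2.2⟩
    · have := mem_halfCoprimes.1 hj
      exact ⟨by omega, gcd_sub_eq_one_of_mem_halfCoprimes hj⟩

theorem two_mul_card_halfCoprimes (hq : 2 < q) : 2 * #(halfCoprimes q) = Nat.totient q := by
  have hdisj : Disjoint (halfCoprimes q) ((halfCoprimes q).image (q - ·)) := by
    simp only [disjoint_left, mem_image, not_exists, not_and]
    intro k hk j hj
    have := mem_halfCoprimes.1 hk
    have := mem_halfCoprimes.1 hj
    omega
  have hinj : Set.InjOn (q - ·) (halfCoprimes q) := fun j hj k hk (h : q - j = q - k) => by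
    have := mem_halfCoprimes.1 hj
    have := mem_halfCoprimes.1 hk
    omega
  rw [Nat.totient_eq_card_coprime, filter_coprime_range_eq_union hq, card_union_of_disjoint hdisj,
    card_image_of_injOn hinj, two_mul]

theorem iSup_span_pair_halfCoprimes {R V : Type*} [Semiring R] [AddCommMonoid V] [Module R V]
    (hq : 2 < q) (f : ℕ → V) :
    ⨆ k ∈ halfCoprimes q, Submodule.span R {f k, f (q - k)} =
      Submodule.span R {w | ∃ k, 1 ≤ k ∧ k < q ∧ k.gcd q = 1 ∧ w = f k} := by
  rw [← Submodule.span_iUnion₂]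
  congr 1
  ext w
  simp only [Set.mem_iUnion, Set.mem_insert_iff, Set.mem_singleton_iff, Set.mem_ofPred_eq,
    exists_prop]
  constructor
  · rintro ⟨k, hk, rfl | rfl⟩ <;> have := mem_halfCoprimes.1 hk
    · exact ⟨k, this.1, by omega, this.2.2, rfl⟩
    · exact ⟨q - k, by omega, by omega, gcd_sub_eq_one_of_mem_halfCoprimes hk, rfl⟩
  · rintro ⟨k, -, hkq, hk, rfl⟩
    rcases mem_halfCoprimes_or_sub_mem hq hkq hk with h | h
    · exact ⟨k, h, .inl rfl⟩
    · exact ⟨q - k, h, .inr (by rw [Nat.sub_sub_self hkq.le])⟩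

end HalfCoprimes

theorem hinner_eq_star_dotProduct {N : ℕ} (u v : Fin N → ℂ) : hinner u v = star u ⬝ᵥ v := rfl

theorem hinner_eq_zero_of_mem_span {N : ℕ} {s t : Set (Fin N → ℂ)}
    (h : ∀ x ∈ s, ∀ y ∈ t, hinner x y = 0) {u v : Fin N → ℂ}
    (hu : u ∈ Submodule.span ℂ s) (hv : v ∈ Submodule.span ℂ t) : hinner u v = 0 := by
  induction hu, hv using Submodule.span_induction₂ with
  | mem_mem x y hx hy => exact h x hx y hy
  | zero_left => simp [hinner_eq_star_dotProduct]
  | zero_right => simp [hinner_eq_star_dotProduct]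
  | add_left _ _ _ _ _ _ h₁ h₂ => simp_all [hinner_eq_star_dotProduct, add_dotProduct]
  | add_right _ _ _ _ _ _ h₁ h₂ => simp_all [hinner_eq_star_dotProduct, dotProduct_add]
  | smul_left _ _ _ _ _ h => simp_all [hinner_eq_star_dotProduct, star_smul]
  | smul_right _ _ _ _ _ h => simp_all [hinner_eq_star_dotProduct]

theorem sum_exp_eq_zero_of_not_dvd {q N : ℕ} (hqN : q ∣ N) {d : ℤ} (hd : ¬ (q : ℤ) ∣ d) :
    ∑ n : Fin N, exp (2 * π * d * (n : ℕ) / q * I) = 0 := by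
  rcases eq_or_ne q 0 with rfl | hq
  · simp [zero_dvd_iff.1 hqN]
  set ζ := exp (2 * π * I / q)
  have hζ : IsPrimitiveRoot ζ q := Complex.isPrimitiveRoot_exp q hq
  have hterm (n : ℕ) : exp (2 * π * d * n / q * I) = (ζ ^ d) ^ n := by
    rw [← zpow_natCast, ← zpow_mul, ← Complex.exp_int_mul]
    push_cast
    ring_nf
  have hne : ζ ^ d ≠ 1 := by rwa [Ne, hζ.zpow_eq_one_iff_dvd]
  have hN : (ζ ^ d) ^ N = 1 := by
    obtain ⟨M, rfl⟩ := hqN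
    rw [← zpow_natCast, ← zpow_mul, mul_comm, zpow_mul, zpow_natCast, pow_mul, hζ.pow_eq_one,
      one_pow, one_zpow]
  simp only [hterm]
  rw [Fin.sum_univ_eq_sum_range (fun n => (ζ ^ d) ^ n), geom_sum_eq hne, hN, sub_self, zero_div]

section ExpVec

-- `expVec N q k` is the paper's `g(2πk/q)`.
noncomputable def expVec (N q k : ℕ) : Fin N → ℂ := fun n =>
  (1 / Real.sqrt N : ℝ) * exp (2 * π * k * (n : ℕ) / q * I)

variable {N q : ℕ}

theorem starRingEnd_expVec (k : ℕ) (n : Fin N) :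
    starRingEnd ℂ (expVec N q k n) =
      (1 / Real.sqrt N : ℝ) * exp (-(2 * π * k * (n : ℕ) / q * I)) := by
  simp [expVec, ← exp_conj, map_div₀, map_ofNat]

theorem star_expVec (hq : q ≠ 0) {k : ℕ} (hk : k ≤ q) :
    (fun n => starRingEnd ℂ (expVec N q k n)) = expVec N q (q - k) := by
  funext n
  rw [starRingEnd_expVec, expVec, Nat.cast_sub hk]
  congr 1
  rw [show 2 * π * ((q : ℂ) - k) * (n : ℕ) / q * I =
      (n : ℕ) * (2 * π * I) + -(2 * π * k * (n : ℕ) / q * I) by field_simp; ring,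
    Complex.exp_add, exp_nat_mul_two_pi_mul_I, one_mul]

theorem hinner_expVec (a b : ℕ) :
    hinner (expVec N q a) (expVec N q b) =
      (1 / N : ℂ) * ∑ n : Fin N, exp (2 * π * ((b - a : ℤ) : ℂ) * (n : ℕ) / q * I) := by
  have hc : ((1 / Real.sqrt N : ℝ) : ℂ) * ((1 / Real.sqrt N : ℝ) : ℂ) = 1 / N := by
    rw [← ofReal_mul, one_div_mul_one_div, Real.mul_self_sqrt N.cast_nonneg]
    push_cast
    rfl
  simp only [hinner, starRingEnd_expVec, mul_sum]
  refine sum_congr rfl fun n _ => ?_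
  rw [expVec, mul_mul_mul_comm, hc, ← Complex.exp_add]
  push_cast
  ring_nf

theorem hinner_expVec_eq_zero (hqN : q ∣ N) {a b : ℕ} (hab : ¬ (q : ℤ) ∣ b - a) :
    hinner (expVec N q a) (expVec N q b) = 0 := by
  rw [hinner_expVec, sum_exp_eq_zero_of_not_dvd hqN hab, mul_zero]

theorem hinner_eq_zero_of_mem_span_expVec_pair (hqN : q ∣ N) {k₁ k₂ : ℕ} (h₁ : 0 < k₁)
    (h₁q : 2 * k₁ < q) (h₂ : 0 < k₂) (h₂q : 2 * k₂ < q) (hne : k₁ ≠ k₂) {u v : Fin N → ℂ}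
    (hu : u ∈ Submodule.span ℂ {expVec N q k₁, expVec N q (q - k₁)})
    (hv : v ∈ Submodule.span ℂ {expVec N q k₂, expVec N q (q - k₂)}) : hinner u v = 0 := by
  refine hinner_eq_zero_of_mem_span ?_ hu hv
  rintro x (rfl | rfl) y (rfl | rfl) <;> refine hinner_expVec_eq_zero hqN fun hd => ?_ <;>
    have := Int.eq_zero_of_abs_lt_dvd hd (abs_lt.2 ⟨by omega, by omega⟩) <;> omega

end ExpVec

theorem stmt_12_general (q M : ℕ) (hq : 3 ≤ q) (N : ℕ) (hN : N = q * M) :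
    let g : ℕ → (Fin N → ℂ) := fun k => fun n =>
      (1 / Real.sqrt N : ℝ) * Complex.exp (2 * π * k * (n : ℕ) / q * Complex.I)
    let S := (Finset.range q).filter (fun k => 1 ≤ k ∧ 2 * k < q ∧ Nat.gcd k q = 1)
    let G : ℕ → Submodule ℂ (Fin N → ℂ) := fun k =>
      Submodule.span ℂ ({g k, fun n => (starRingEnd ℂ) (g k n)} : Set (Fin N → ℂ))
    S.card = Nat.totient q / 2 ∧
    (∀ k₁ ∈ S, ∀ k₂ ∈ S, k₁ ≠ k₂ →
      ∀ u ∈ G k₁, ∀ v ∈ G k₂, hinner u v = 0) ∧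
    (⨆ k ∈ S, G k) =
      Submodule.span ℂ
        {w : Fin N → ℂ | ∃ k, 1 ≤ k ∧ k < q ∧ Nat.gcd k q = 1 ∧ w = g k} := by
  intro g S G
  have hqN : q ∣ N := hN ▸ dvd_mul_right q M
  have hG (k : ℕ) (hk : k ∈ halfCoprimes q) :
      G k = Submodule.span ℂ {expVec N q k, expVec N q (q - k)} := by
    rw [← star_expVec (k := k) (by omega) (by have := mem_halfCoprimes.1 hk; omega)]
    rfl
  refine ⟨?_, ?_, ?_⟩
  · have := two_mul_card_halfCoprimes (q := q) (by omega)
    change #(halfCoprimes q) = _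
    omega
  · intro k₁ h₁ k₂ h₂ hne u hu v hv
    rw [hG k₁ h₁] at hu
    rw [hG k₂ h₂] at hv
    have := mem_halfCoprimes.1 h₁
    have := mem_halfCoprimes.1 h₂
    exact hinner_eq_zero_of_mem_span_expVec_pair hqN (by omega) (by omega) (by omega) (by omega)
      hne hu hv
  · exact (biSup_congr hG).trans (iSup_span_pair_halfCoprimes (by omega) (expVec N q))

theorem stmt_12 (q M : ℕ) (hq : 3 ≤ q) (hM : 0 < M) (N : ℕ) (hN : N = q * M) :
    let g : ℕ → (Fin N → ℂ) := fun k => fun n =>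
      (1 / Real.sqrt N : ℝ) * Complex.exp (2 * π * k * (n : ℕ) / q * Complex.I)
    let S := (Finset.range q).filter (fun k => 1 ≤ k ∧ 2 * k < q ∧ Nat.gcd k q = 1)
    let G : ℕ → Submodule ℂ (Fin N → ℂ) := fun k =>
      Submodule.span ℂ ({g k, fun n => (starRingEnd ℂ) (g k n)} : Set (Fin N → ℂ))
    S.card = Nat.totient q / 2 ∧
    (∀ k₁ ∈ S, ∀ k₂ ∈ S, k₁ ≠ k₂ →
      ∀ u ∈ G k₁, ∀ v ∈ G k₂, hinner u v = 0) ∧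
    (⨆ k ∈ S, G k) =
      Submodule.span ℂ
        {w : Fin N → ℂ | ∃ k, 1 ≤ k ∧ k < q ∧ Nat.gcd k q = 1 ∧ w = g k} :=
  stmt_12_general q M hq N hN
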